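/- Let K be a complete discrete valuation field of characteristic 0 with residue characteristic p > 0, and φ : F → G an isogeny of formal groups over O_K of height 1 whose kernel F[φ] is contained in F(K). Set t := v_K(D(φ)). Then for every nonzero x ∈ F[φ], one has v_K(x) = t/(p-1); in particular (p-1) divides t. -/

import Mathlib

/-- Data of a normalized discrete (additive) valuation on a field `K`:
`v : K → ℤ ∪ {∞}` with `v(x) = ∞ ↔ x = 0`, multiplicative, ultrametric and surjective
(so `K` is a discrete valuation field, `O_K = {v ≥ 0}`, `m_K = {v > 0}`). -/
structure DVF (K : Type) [Field K] where
  v : K → WithTop ℤ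
  v_top_iff : ∀ x : K, v x = ⊤ ↔ x = 0
  v_mul : ∀ x y : K, v (x * y) = v x + v y
  v_add : ∀ x y : K, min (v x) (v y) ≤ v (x + y)
  v_surj : ∀ n : ℤ, ∃ x : K, v x = (n : WithTop ℤ)

namespace DVF

variable {K : Type} [Field K] (V : DVF K)

/-- The sequence `s` converges to `L` in the valuation topology of `V`. -/
def Tendsto (s : ℕ → K) (L : K) : Prop :=
  ∀ N : ℤ, ∃ M : ℕ, ∀ m : ℕ, M ≤ m → (N : WithTop ℤ) ≤ V.v (s m - L)

/-- `K` is complete with respect to the valuation `V`: every Cauchy sequence converges. -/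
def IsComplete : Prop :=
  ∀ s : ℕ → K,
    (∀ N : ℤ, ∃ M : ℕ, ∀ m k : ℕ, M ≤ m → M ≤ k → (N : WithTop ℤ) ≤ V.v (s m - s k)) →
    ∃ L : K, V.Tendsto s L

/-- The residue field `O_K/m_K` (of characteristic `p`) is perfect:
every residue class is a `p`-th power. -/
def ResiduePerfect (p : ℕ) : Prop :=
  ∀ x : K, 0 ≤ V.v x → ∃ y : K, 0 ≤ V.v y ∧ 0 < V.v (x - y ^ p)

/-- The residue field `O_K/m_K` is finite. -/
def ResidueFinite : Prop :=
  ∃ S : Finset K, ∀ x : K, 0 ≤ V.v x → ∃ y ∈ S, 0 < V.v (x - y)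

/-- `K` is Henselian: simple roots of integral polynomials lift from the residue field. -/
def IsHenselian : Prop :=
  ∀ f : Polynomial K, (∀ i : ℕ, 0 ≤ V.v (f.coeff i)) →
    ∀ a : K, 0 ≤ V.v a → 0 < V.v (f.eval a) → V.v (f.derivative.eval a) = 0 →
      ∃ b : K, f.eval b = 0 ∧ 0 < V.v (b - a)

end DVF

/-- `y` is the value of the one-variable power series `φ` at `x` (limit of partial sums). -/
def PSEval {K : Type} [Field K] (V : DVF K) (φ : PowerSeries K) (x y : K) : Prop :=
  V.Tendsto (fun n => ∑ i ∈ Finset.range n, PowerSeries.coeff (R := K) i φ * x ^ i) y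

/-- `z` is the value of the two-variable power series `F` at `(x, y)`. -/
def FEval {K : Type} [Field K] (V : DVF K) (F : MvPowerSeries (Fin 2) K) (x y z : K) : Prop :=
  V.Tendsto (fun n => ∑ i ∈ Finset.range n, ∑ j ∈ Finset.range n,
    MvPowerSeries.coeff (R := K) (Finsupp.single 0 i + Finsupp.single 1 j) F * x ^ i * y ^ j) z

/-- A one-dimensional commutative formal group law `F(X,Y)` over the valuation ring `O_K`
(integral coefficients, `F ≡ X + Y` mod degree 2, commutative and associative;
associativity `F(F(X,Y),Z) = F(X,F(Y,Z))` is written out coefficientwise). -/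
structure FGL (K : Type) [Field K] (V : DVF K) where
  F : MvPowerSeries (Fin 2) K
  int_coeff : ∀ d : Fin 2 →₀ ℕ, 0 ≤ V.v (MvPowerSeries.coeff (R := K) d F)
  const : MvPowerSeries.coeff (R := K) 0 F = 0
  linX : MvPowerSeries.coeff (R := K) (Finsupp.single 0 1) F = 1
  linY : MvPowerSeries.coeff (R := K) (Finsupp.single 1 1) F = 1
  comm : ∀ d : Fin 2 →₀ ℕ,
    MvPowerSeries.coeff (R := K) d F = MvPowerSeries.coeff (R := K) (Finsupp.equivMapDomain (Equiv.swap 0 1) d) F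
  assoc : ∀ i j l : ℕ,
    (∑ k ∈ Finset.range (i + j + 1),
      MvPowerSeries.coeff (R := K) (Finsupp.single 0 k + Finsupp.single 1 l) F *
        MvPowerSeries.coeff (R := K) (Finsupp.single 0 i + Finsupp.single 1 j) (F ^ k)) =
    (∑ k ∈ Finset.range (j + l + 1),
      MvPowerSeries.coeff (R := K) (Finsupp.single 0 i + Finsupp.single 1 k) F *
        MvPowerSeries.coeff (R := K) (Finsupp.single 0 j + Finsupp.single 1 l) (F ^ k))

/-- An isogeny `φ : F → G` of formal groups over `O_K`: a nonzero integral power series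
with `φ(0) = 0` and `φ(F(X,Y)) = G(φ(X),φ(Y))` (written out coefficientwise). -/
structure Isog {K : Type} [Field K] (V : DVF K) (Fg Gg : FGL K V) where
  φ : PowerSeries K
  ne_zero : φ ≠ 0
  int_coeff : ∀ i : ℕ, 0 ≤ V.v (PowerSeries.coeff (R := K) i φ)
  const : PowerSeries.coeff (R := K) 0 φ = 0
  hom : ∀ i j : ℕ,
    (∑ k ∈ Finset.range (i + j + 1),
      PowerSeries.coeff (R := K) k φ *
        MvPowerSeries.coeff (R := K) (Finsupp.single 0 i + Finsupp.single 1 j) (Fg.F ^ k)) =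
    (∑ k ∈ Finset.range (i + j + 1), ∑ l ∈ Finset.range (i + j + 1),
      MvPowerSeries.coeff (R := K) (Finsupp.single 0 k + Finsupp.single 1 l) Gg.F *
        PowerSeries.coeff (R := K) i (φ ^ k) * PowerSeries.coeff (R := K) j (φ ^ l))

/-- The power series `φ` has height `n`: `φ(T) ≡ ψ(T^{p^n}) (mod m_K)`
for some integral `ψ` with `v(ψ'(0)) = 0`. -/
def HasHeight {K : Type} [Field K] (V : DVF K) (p n : ℕ) (φ : PowerSeries K) : Prop :=
  ∃ ψ : PowerSeries K, (∀ i : ℕ, 0 ≤ V.v (PowerSeries.coeff (R := K) i ψ)) ∧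
    V.v (PowerSeries.coeff (R := K) 1 ψ) = 0 ∧
    ∀ j : ℕ, 0 < V.v (PowerSeries.coeff (R := K) j φ -
      (if p ^ n ∣ j then PowerSeries.coeff (R := K) (j / p ^ n) ψ else 0))

/-!
Let `x ≠ 0` lie in the kernel. Evaluating `φ(F(X, Y)) = G(φ(X), φ(Y))` at points of `m_K` shows
that the kernel is closed under `F`, and `F(a, b) ≡ a + b` modulo terms of degree `2`. Hence the
kernel contains roots `u_k ≡ k x` for `0 < k < p`; as `k` is a unit, they all have valuation
`v(x)` and are pairwise distinct, so they are the `p - 1` nonzero points of the kernel.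
Height `1` says that `φ(T) / T` has Weierstrass degree `p - 1`; dividing out its `p - 1` roots one
at a time (the Newton polygon) gives `t = v(φ'(0)) = (p - 1) v(x)`.
-/

section BoxPoly

open MvPolynomial Finsupp

variable {R : Type*} [CommSemiring R]

lemma single_zero_add_single_one (d : Fin 2 →₀ ℕ) : single 0 (d 0) + single 1 (d 1) = d := by
  ext i
  fin_cases i <;> simp

lemma single_zero_add_single_one_eq_iff {i j : ℕ} {d : Fin 2 →₀ ℕ} :
    single 0 i + single 1 j = d ↔ (i, j) = (d 0, d 1) := by
  constructor
  · rintro rfl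
    simp
  · rintro ⟨⟩
    exact single_zero_add_single_one d

lemma degree_fin_two (d : Fin 2 →₀ ℕ) : d.degree = d 0 + d 1 := by
  rw [degree_eq_sum, Fin.sum_univ_two]

noncomputable def boxPoly (c : ℕ → ℕ → R) (n : ℕ) : MvPolynomial (Fin 2) R :=
  ∑ ij ∈ Finset.range n ×ˢ Finset.range n, monomial (single 0 ij.1 + single 1 ij.2) (c ij.1 ij.2)

lemma coeff_boxPoly (c : ℕ → ℕ → R) (n : ℕ) (d : Fin 2 →₀ ℕ) :
    coeff d (boxPoly c n) = if d 0 < n ∧ d 1 < n then c (d 0) (d 1) else 0 := by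
  classical
  simp_rw [boxPoly, coeff_sum, coeff_monomial, single_zero_add_single_one_eq_iff]
  rw [Finset.sum_ite_eq']
  simp

lemma aeval_boxPoly {A : Type*} [CommSemiring A] [Algebra R A] (c : ℕ → ℕ → R) (n : ℕ)
    (g : Fin 2 → A) :
    aeval g (boxPoly c n) =
      ∑ i ∈ Finset.range n, ∑ j ∈ Finset.range n, algebraMap R A (c i j) * g 0 ^ i * g 1 ^ j := by
  simp [boxPoly, Finset.sum_product, aeval_monomial, mul_assoc]

lemma aeval_X_zero_mul_aeval_X_one (u w : Polynomial R) {N : ℕ} (hu : u.natDegree < N)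
    (hw : w.natDegree < N) :
    Polynomial.aeval (X 0) u * Polynomial.aeval (X 1) w =
      boxPoly (fun i j => u.coeff i * w.coeff j) N := by
  rw [Polynomial.aeval_eq_sum_range' hu, Polynomial.aeval_eq_sum_range' hw, Finset.sum_mul_sum,
    boxPoly, Finset.sum_product]
  simp [X_pow_eq_monomial, smul_monomial, monomial_mul]

lemma coeff_aeval_X_zero_mul_aeval_X_one (u w : Polynomial R) (d : Fin 2 →₀ ℕ) :
    coeff d (Polynomial.aeval (X 0) u * Polynomial.aeval (X 1) w) =
      u.coeff (d 0) * w.coeff (d 1) := by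
  set N := max u.natDegree w.natDegree + 1
  rw [aeval_X_zero_mul_aeval_X_one u w (N := N) (by omega) (by omega), coeff_boxPoly]
  split_ifs with h
  · rfl
  rcases not_and_or.1 h with h | h
  · rw [Polynomial.coeff_eq_zero_of_natDegree_lt (p := u) (by omega), zero_mul]
  · rw [Polynomial.coeff_eq_zero_of_natDegree_lt (p := w) (by omega), mul_zero]

end BoxPoly

lemma MvPowerSeries.coeff_pow_eq_zero_of_degree_lt {σ R : Type*} [CommSemiring R]
    {f : MvPowerSeries σ R} (hf : coeff 0 f = 0) {d : σ →₀ ℕ} {k : ℕ}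
    (hd : d.degree < k) : coeff d (f ^ k) = 0 :=
  coeff_of_lt_order (lt_of_lt_of_le (by exact_mod_cast hd)
    (le_order_pow_of_constantCoeff_eq_zero k (by rwa [← coeff_zero_eq_constantCoeff_apply])))

lemma PowerSeries.coeff_pow_eq_zero_of_lt {R : Type*} [CommSemiring R]
    {f : PowerSeries R} (hf : coeff 0 f = 0) {m k : ℕ} (hm : m < k) : coeff m (f ^ k) = 0 :=
  coeff_of_lt_order m (lt_of_lt_of_le (by exact_mod_cast hm)
    (le_order_pow_of_constantCoeff_eq_zero k (by rwa [← coeff_zero_eq_constantCoeff_apply])))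

lemma PowerSeries.coeff_trunc_pow {R : Type*} [CommSemiring R] (f : PowerSeries R) {m n : ℕ}
    (hm : m < n) (k : ℕ) : ((trunc n f) ^ k).coeff m = coeff m (f ^ k) := by
  have h := congrArg (Polynomial.coeff · m) (trunc_trunc_pow f n k)
  simp only [coeff_trunc, if_pos hm] at h
  rw [← h, ← Polynomial.coe_pow, Polynomial.coeff_coe]

namespace DVF

variable {K : Type} [Field K] (V : DVF K)

lemma v_zero : V.v 0 = ⊤ := (V.v_top_iff 0).2 rfl

lemma v_one : V.v 1 = 0 := by
  have h : V.v 1 = V.v 1 + V.v 1 := by simpa using V.v_mul 1 1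
  lift V.v 1 to ℤ using fun h1 => one_ne_zero ((V.v_top_iff 1).1 h1) with a
  norm_cast at h ⊢
  omega

/-- `V` as a Mathlib additive valuation, to borrow the ultrametric calculus. -/
def val : AddValuation K (WithTop ℤ) := AddValuation.of V.v V.v_zero V.v_one V.v_add V.v_mul

lemma v_ne_top {x : K} (hx : x ≠ 0) : V.v x ≠ ⊤ := fun h => hx ((V.v_top_iff x).1 h)

lemma v_neg (x : K) : V.v (-x) = V.v x := V.val.map_neg x

lemma v_pow (x : K) (n : ℕ) : V.v (x ^ n) = n • V.v x := V.val.map_pow x n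

lemma le_v_add {x y : K} {c : WithTop ℤ} (hx : c ≤ V.v x) (hy : c ≤ V.v y) : c ≤ V.v (x + y) :=
  V.val.map_le_add hx hy

lemma le_v_sub {x y : K} {c : WithTop ℤ} (hx : c ≤ V.v x) (hy : c ≤ V.v y) : c ≤ V.v (x - y) :=
  V.val.map_le_sub hx hy

lemma le_v_sum {ι : Type*} {s : Finset ι} {f : ι → K} {c : WithTop ℤ}
    (h : ∀ i ∈ s, c ≤ V.v (f i)) : c ≤ V.v (∑ i ∈ s, f i) :=
  V.val.map_le_sum h

lemma v_add_eq_left {x y : K} (h : V.v x < V.v y) : V.v (x + y) = V.v x :=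
  V.val.map_add_eq_of_lt_left h

lemma v_mul_nonneg {x y : K} (hx : 0 ≤ V.v x) (hy : 0 ≤ V.v y) : 0 ≤ V.v (x * y) := by
  rw [V.v_mul]; exact add_nonneg hx hy

lemma v_natCast_nonneg (n : ℕ) : 0 ≤ V.v (n : K) := by
  induction n with
  | zero => simp [V.v_zero]
  | succ n ih => push_cast; exact V.le_v_add ih V.v_one.ge

lemma v_intCast_nonneg (n : ℤ) : 0 ≤ V.v (n : K) := by
  obtain ⟨m, rfl | rfl⟩ := Int.eq_nat_or_neg n
  · exact_mod_cast V.v_natCast_nonneg m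
  · push_cast; rw [V.v_neg]; exact V.v_natCast_nonneg m

/-- A Bézout relation `a k + b p = 1` forbids `k` and `p` from both lying in `m_K`. -/
lemma v_natCast_eq_zero_of_coprime {p k : ℕ} (hp : 0 < V.v (p : K)) (hk : k.Coprime p) :
    V.v (k : K) = 0 := by
  have hbezout : (Nat.gcdA k p : K) * k + (Nat.gcdB k p : K) * p = 1 := by
    have h := congrArg (Int.cast : ℤ → K) (Nat.gcd_eq_gcd_ab k p)
    rw [hk.gcd_eq_one] at h
    push_cast at h
    linear_combination -h
  refine le_antisymm (not_lt.1 fun hk0 => ?_) (V.v_natCast_nonneg k)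
  have hpos : 0 < V.v ((Nat.gcdA k p : K) * k + (Nat.gcdB k p : K) * p) := by
    refine lt_of_lt_of_le (lt_min ?_ ?_) (V.v_add _ _) <;> rw [V.v_mul]
    · exact lt_add_of_nonneg_of_lt (V.v_intCast_nonneg _) hk0
    · exact lt_add_of_nonneg_of_lt (V.v_intCast_nonneg _) hp
  rw [hbezout, V.v_one] at hpos
  exact lt_irrefl _ hpos

lemma eq_zero_of_forall_le_v {x : K} (h : ∀ N : ℤ, (N : WithTop ℤ) ≤ V.v x) : x = 0 := by
  by_contra hx
  lift V.v x to ℤ using V.v_ne_top hx with a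
  have := h (a + 1)
  norm_cast at this
  omega

lemma one_le_of_pos {c : WithTop ℤ} (h : 0 < c) : 1 ≤ c := by
  induction c with
  | top => exact le_top
  | coe c => exact_mod_cast (show (0 : ℤ) < c by exact_mod_cast h)

lemma natCast_le_nsmul {c : WithTop ℤ} (h : 0 < c) (n : ℕ) : ((n : ℤ) : WithTop ℤ) ≤ n • c :=
  calc ((n : ℤ) : WithTop ℤ) = n • 1 := by simp
  _ ≤ n • c := nsmul_le_nsmul_right (one_le_of_pos h) n

lemma v_eq_of_two_nsmul_le_v_sub {p : ℕ} (hp : 0 < V.v (p : K)) {k : ℕ} (hk : k.Coprime p)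
    {x u : K} (hx0 : x ≠ 0) (hx : 0 < V.v x) (hu : 2 • V.v x ≤ V.v (u - k * x)) :
    V.v u = V.v x := by
  have hkx : V.v (k * x) = V.v x := by rw [V.v_mul, V.v_natCast_eq_zero_of_coprime hp hk, zero_add]
  have hlt : V.v x < 2 • V.v x := by
    lift V.v x to ℤ using V.v_ne_top hx0 with w
    rw [two_nsmul]
    norm_cast at hx ⊢
    omega
  rw [show u = k * x + (u - k * x) by ring, V.v_add_eq_left (hkx ▸ hlt.trans_le hu), hkx]

variable {V}

lemma Tendsto.unique {s : ℕ → K} {L L' : K} (h : V.Tendsto s L) (h' : V.Tendsto s L') :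
    L = L' := by
  refine sub_eq_zero.1 (V.eq_zero_of_forall_le_v fun N => ?_)
  obtain ⟨M, hM⟩ := h N
  obtain ⟨M', hM'⟩ := h' N
  have e : L - L' = (s (max M M') - L') - (s (max M M') - L) := by ring
  rw [e]
  exact V.le_v_sub (hM' _ (le_max_right _ _)) (hM _ (le_max_left _ _))

lemma tendsto_const (c : K) : V.Tendsto (fun _ => c) c :=
  fun _ => ⟨0, fun _ _ => by simp [V.v_zero]⟩

lemma Tendsto.congr {s s' : ℕ → K} {L : K} (h : V.Tendsto s L) (hs : ∀ n, s n = s' n) :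
    V.Tendsto s' L := by
  simpa only [funext hs] using h

lemma Tendsto.comp_succ {s : ℕ → K} {L : K} (h : V.Tendsto s L) :
    V.Tendsto (fun n => s (n + 1)) L := fun N =>
  let ⟨M, hM⟩ := h N
  ⟨M, fun m hm => hM (m + 1) (by omega)⟩

lemma Tendsto.of_v_sub {s s' : ℕ → K} {L : K} (h : V.Tendsto s L)
    (hs : ∀ N : ℤ, ∃ M : ℕ, ∀ n, M ≤ n → (N : WithTop ℤ) ≤ V.v (s' n - s n)) :
    V.Tendsto s' L := by
  intro N
  obtain ⟨M, hM⟩ := h N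
  obtain ⟨M', hM'⟩ := hs N
  refine ⟨max M M', fun n hn => ?_⟩
  rw [show s' n - L = (s' n - s n) + (s n - L) by ring]
  exact V.le_v_add (hM' n (le_of_max_le_right hn)) (hM n (le_of_max_le_left hn))

lemma tendsto_zero_of_natCast_le {s : ℕ → K} (hs : ∀ n : ℕ, ((n : ℤ) : WithTop ℤ) ≤ V.v (s n)) :
    V.Tendsto s 0 := by
  intro N
  refine ⟨N.toNat, fun n hn => ?_⟩
  rw [sub_zero]
  exact le_trans (WithTop.coe_le_coe.2 (show N ≤ (n : ℤ) by omega)) (hs n)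

lemma Tendsto.add {s s' : ℕ → K} {L L' : K} (h : V.Tendsto s L) (h' : V.Tendsto s' L') :
    V.Tendsto (fun n => s n + s' n) (L + L') := by
  intro N
  obtain ⟨M, hM⟩ := h N
  obtain ⟨M', hM'⟩ := h' N
  refine ⟨max M M', fun m hm => ?_⟩
  rw [show s m + s' m - (L + L') = (s m - L) + (s' m - L') by ring]
  exact V.le_v_add (hM m (le_of_max_le_left hm)) (hM' m (le_of_max_le_right hm))

lemma Tendsto.const_mul {s : ℕ → K} {L : K} (c : K) (h : V.Tendsto s L) :
    V.Tendsto (fun n => c * s n) (c * L) := by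
  intro N
  by_cases hc : c = 0
  · exact ⟨0, fun m _ => by simp [hc, V.v_zero]⟩
  lift V.v c to ℤ using V.v_ne_top hc with a ha
  obtain ⟨M, hM⟩ := h (N - a)
  refine ⟨M, fun m hm => ?_⟩
  rw [← mul_sub, V.v_mul, ← ha]
  calc (N : WithTop ℤ) = (a : WithTop ℤ) + ((N - a : ℤ) : WithTop ℤ) := by norm_cast; ring
  _ ≤ (a : WithTop ℤ) + V.v (s m - L) := add_le_add_right (hM m hm) _

lemma Tendsto.sub {s s' : ℕ → K} {L L' : K} (h : V.Tendsto s L) (h' : V.Tendsto s' L') :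
    V.Tendsto (fun n => s n - s' n) (L - L') := by
  simpa [sub_eq_add_neg] using h.add (h'.const_mul (-1))

lemma Tendsto.le_v {s : ℕ → K} {L : K} (h : V.Tendsto s L) {c : WithTop ℤ} {M₀ : ℕ}
    (hc : ∀ n, M₀ ≤ n → c ≤ V.v (s n)) : c ≤ V.v L := by
  induction c with
  | top =>
    have h0 : V.Tendsto s 0 := fun N =>
      ⟨M₀, fun m hm => by rw [sub_zero, (V.v_top_iff _).1 (top_le_iff.1 (hc m hm)), V.v_zero]
                          exact le_top⟩
    rw [h.unique h0, V.v_zero]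
  | coe a =>
    obtain ⟨M, hM⟩ := h a
    have e : L = s (max M M₀) - (s (max M M₀) - L) := by ring
    rw [e]
    exact V.le_v_sub (hc _ (le_max_right _ _)) (hM _ (le_max_left _ _))

variable (V) in
lemma exists_tendsto_sum (hcomp : V.IsComplete) {a : ℕ → K}
    (ha : ∀ N : ℤ, ∃ M : ℕ, ∀ j, M ≤ j → (N : WithTop ℤ) ≤ V.v (a j)) :
    ∃ L, V.Tendsto (fun n => ∑ j ∈ Finset.range n, a j) L := by
  refine hcomp _ fun N => ?_
  obtain ⟨M, hM⟩ := ha N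
  refine ⟨M, fun m k hm hk => ?_⟩
  rcases le_total k m with hkm | hmk
  · rw [Finset.sum_range_sub_sum_range hkm]
    exact V.le_v_sum fun j hj => hM j (by simp at hj; omega)
  · rw [← neg_sub, V.v_neg, Finset.sum_range_sub_sum_range hmk]
    exact V.le_v_sum fun j hj => hM j (by simp at hj; omega)

variable (V)

/-- `PSEval V φ` is definitionally `SEval` of the coefficient sequence of `φ`. -/
def SEval (c : ℕ → K) (z L : K) : Prop :=
  V.Tendsto (fun n => ∑ i ∈ Finset.range n, c i * z ^ i) L

/-- The reduction of `c` modulo `m_K` has order exactly `n`. -/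
structure HasWeierstrassDegree (c : ℕ → K) (n : ℕ) : Prop where
  integral : ∀ j, 0 ≤ V.v (c j)
  pos_of_lt : ∀ j < n, 0 < V.v (c j)
  eq_zero : V.v (c n) = 0

variable {V}

lemma le_v_partialSum_of_sEval_eq_zero {c : ℕ → K} (hc : ∀ i, 0 ≤ V.v (c i)) {z : K}
    (hz : 0 < V.v z) (hroot : V.SEval c z 0) (n : ℕ) :
    n • V.v z ≤ V.v (∑ i ∈ Finset.range n, c i * z ^ i) := by
  have htail := hroot.sub (tendsto_const (∑ i ∈ Finset.range n, c i * z ^ i))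
  have h := htail.le_v (c := n • V.v z) (M₀ := n) fun m hm => ?_
  · rwa [zero_sub, V.v_neg] at h
  rw [Finset.sum_range_sub_sum_range hm]
  refine V.le_v_sum fun i hi => ?_
  rw [Finset.mem_filter, Finset.mem_range] at hi
  rw [V.v_mul, V.v_pow]
  exact le_add_of_nonneg_of_le (hc i) (nsmul_le_nsmul_left hz.le hi.2)

/-- Division by `T - z` at a root `z ∈ m_K`: the quotient is
`ψ n = -(c 0 + ⋯ + c n z ^ n) / z ^ (n + 1)`, integral because `c(z) = 0`. -/
lemma exists_quotient_of_sEval_eq_zero {c : ℕ → K} (hc : ∀ i, 0 ≤ V.v (c i)) {z : K}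
    (hz0 : z ≠ 0) (hz : 0 < V.v z) (hroot : V.SEval c z 0) :
    ∃ ψ : ℕ → K, (∀ n, 0 ≤ V.v (ψ n)) ∧ c 0 = -(z * ψ 0) ∧
      ∀ n, c (n + 1) = ψ n - z * ψ (n + 1) := by
  set P : ℕ → K := fun n => ∑ i ∈ Finset.range n, c i * z ^ i
  refine ⟨fun n => -P (n + 1) / z ^ (n + 1), fun n => ?_, ?_, fun n => ?_⟩
  · have hfin : (n + 1) • V.v z ≠ ⊤ := by rw [← V.v_pow]; exact V.v_ne_top (pow_ne_zero _ hz0)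
    refine WithTop.le_of_add_le_add_right hfin ?_
    rw [zero_add, ← V.v_pow, ← V.v_mul, div_mul_cancel₀ _ (pow_ne_zero _ hz0), V.v_neg, V.v_pow]
    exact le_v_partialSum_of_sEval_eq_zero hc hz hroot (n + 1)
  · simp [P]
    field_simp
  · simp only [P, Finset.sum_range_succ]
    field_simp
    ring

lemma sEval_eq_zero_of_eq_mul_sub {c ψ : ℕ → K} (hψ : ∀ n, 0 ≤ V.v (ψ n)) {z y : K}
    (hz : 0 ≤ V.v z) (hc0 : c 0 = -(z * ψ 0)) (hc : ∀ n, c (n + 1) = ψ n - z * ψ (n + 1))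
    (hy : 0 < V.v y) (hyz : y ≠ z) (hroot : V.SEval c y 0) : V.SEval ψ y 0 := by
  have key : ∀ n, (y - z) * ∑ m ∈ Finset.range n, ψ m * y ^ m =
      ∑ m ∈ Finset.range (n + 1), c m * y ^ m + z * (ψ n * y ^ n) := by
    intro n
    induction n with
    | zero => simp [hc0]
    | succ n ih =>
      rw [Finset.sum_range_succ, mul_add, ih, Finset.sum_range_succ _ (n + 1), hc]
      ring
  have hrem : V.Tendsto (fun n => z * (ψ n * y ^ n)) 0 := by
    refine tendsto_zero_of_natCast_le fun n => ?_
    rw [V.v_mul, V.v_mul, V.v_pow]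
    exact le_add_of_nonneg_of_le hz (le_add_of_nonneg_of_le (hψ n) (natCast_le_nsmul hy n))
  have := ((hroot.comp_succ.add hrem).congr fun n => (key n).symm).const_mul (y - z)⁻¹
  simp only [add_zero, mul_zero, ← mul_assoc, inv_mul_cancel₀ (sub_ne_zero.2 hyz), one_mul] at this
  exact this

lemma HasWeierstrassDegree.of_eq_mul_sub {c ψ : ℕ → K} {n : ℕ}
    (hc : V.HasWeierstrassDegree c (n + 1)) (hψ : ∀ j, 0 ≤ V.v (ψ j)) {z : K} (hz : 0 < V.v z)
    (hrec : ∀ j, c (j + 1) = ψ j - z * ψ (j + 1)) : V.HasWeierstrassDegree ψ n := by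
  have hψ_eq : ∀ j, ψ j = c (j + 1) + z * ψ (j + 1) := fun j => by rw [hrec]; ring
  have hsmall : ∀ j, 0 < V.v (z * ψ (j + 1)) := fun j => by
    rw [V.v_mul]; exact lt_add_of_lt_of_nonneg hz (hψ _)
  refine ⟨hψ, fun j hj => ?_, ?_⟩
  · rw [hψ_eq]
    exact lt_of_lt_of_le (lt_min (hc.pos_of_lt _ (by omega)) (hsmall j)) (V.v_add _ _)
  · rw [hψ_eq, V.v_add_eq_left (by rw [hc.eq_zero]; exact hsmall n), hc.eq_zero]

theorem v_coeff_zero_eq_sum_of_roots {c : ℕ → K} {n : ℕ} (hc : V.HasWeierstrassDegree c n)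
    {R : Finset K} (hR : R.card = n) (hroots : ∀ z ∈ R, z ≠ 0 ∧ 0 < V.v z ∧ V.SEval c z 0) :
    V.v (c 0) = ∑ z ∈ R, V.v z := by
  classical
  induction R using Finset.induction_on generalizing c n with
  | empty =>
    subst hR
    simpa using hc.eq_zero
  | @insert z R hzR ih =>
    rw [Finset.card_insert_of_notMem hzR] at hR
    subst hR
    obtain ⟨hz0, hz, hzroot⟩ := hroots z (Finset.mem_insert_self z R)
    obtain ⟨ψ, hψ, hc0, hrec⟩ :=
      exists_quotient_of_sEval_eq_zero hc.integral hz0 hz hzroot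
    have hψroots : ∀ y ∈ R, y ≠ 0 ∧ 0 < V.v y ∧ V.SEval ψ y 0 := fun y hyR => by
      obtain ⟨hy0, hy, hyroot⟩ := hroots y (Finset.mem_insert_of_mem hyR)
      exact ⟨hy0, hy, sEval_eq_zero_of_eq_mul_sub hψ hz.le hc0 hrec hy
        (fun h => hzR (h ▸ hyR)) hyroot⟩
    rw [Finset.sum_insert hzR, hc0, V.v_neg, V.v_mul,
      ih (hc.of_eq_mul_sub hψ hz hrec) rfl hψroots]

variable (V) in
lemma hasWeierstrassDegree_of_hasHeight {p n : ℕ} (hp : 0 < p) {φ : PowerSeries K}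
    (hφ : ∀ i, 0 ≤ V.v (PowerSeries.coeff i φ)) (hht : HasHeight V p n φ) :
    V.HasWeierstrassDegree (fun j => PowerSeries.coeff (j + 1) φ) (p ^ n - 1) := by
  obtain ⟨ψ, -, hψ1, hred⟩ := hht
  have hpn : 0 < p ^ n := pow_pos hp n
  refine ⟨fun j => hφ _, fun j hj => ?_, ?_⟩
  · have h := hred (j + 1)
    rwa [if_neg (Nat.not_dvd_of_pos_of_lt (by omega) (by omega)), sub_zero] at h
  · have h := hred (p ^ n)
    rw [if_pos dvd_rfl, Nat.div_self hpn] at h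
    rw [Nat.sub_add_cancel hpn,
      ← sub_add_cancel (PowerSeries.coeff (p ^ n) φ) (PowerSeries.coeff 1 ψ), add_comm,
      V.v_add_eq_left (by rwa [hψ1]), hψ1]

variable (V) in
lemma exists_sEval (hcomp : V.IsComplete) {c : ℕ → K} (hc : ∀ i, 0 ≤ V.v (c i)) {z : K}
    (hz : 0 < V.v z) : ∃ L, V.SEval c z L :=
  V.exists_tendsto_sum hcomp fun N => ⟨N.toNat, fun j hj => by
    rw [V.v_mul, V.v_pow]
    exact le_trans (WithTop.coe_le_coe.2 (show N ≤ (j : ℤ) by omega))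
      (le_add_of_nonneg_of_le (hc j) (natCast_le_nsmul hz j))⟩

lemma v_sub_le_v_pow_sub_pow {x y : K} (hx : 0 ≤ V.v x) (hy : 0 ≤ V.v y) (n : ℕ) :
    V.v (x - y) ≤ V.v (x ^ n - y ^ n) := by
  rw [← geom_sum₂_mul, V.v_mul]
  refine le_add_of_nonneg_left (V.le_v_sum fun i _ => ?_)
  rw [V.v_mul, V.v_pow, V.v_pow]
  exact add_nonneg (nsmul_nonneg hx _) (nsmul_nonneg hy _)

lemma Tendsto.partialSum_comp {c : ℕ → K} (hc : ∀ i, 0 ≤ V.v (c i)) {s : ℕ → K} {z W : K}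
    (hs : V.Tendsto s z) (hs0 : ∀ n, 0 ≤ V.v (s n)) (hz : 0 ≤ V.v z) (hW : V.SEval c z W) :
    V.Tendsto (fun n => ∑ i ∈ Finset.range n, c i * s n ^ i) W :=
  hW.of_v_sub fun N => by
    obtain ⟨M, hM⟩ := hs N
    refine ⟨M, fun n hn => ?_⟩
    rw [← Finset.sum_sub_distrib]
    refine V.le_v_sum fun i _ => ?_
    rw [← mul_sub, V.v_mul]
    exact le_add_of_nonneg_of_le (hc i) ((hM n hn).trans (V.v_sub_le_v_pow_sub_pow (hs0 n) hz i))

section Polynomials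

open MvPolynomial

variable (V) in
def integralPolys (σ : Type*) : Subring (MvPolynomial σ K) where
  carrier := {P | ∀ d, 0 ≤ V.v (P.coeff d)}
  mul_mem' {P Q} hP hQ d := by
    classical
    rw [coeff_mul]
    exact V.le_v_sum fun x _ => V.v_mul_nonneg (hP x.1) (hQ x.2)
  one_mem' d := by
    classical
    rw [coeff_one]
    split_ifs
    · exact V.v_one.ge
    · simp [V.v_zero]
  add_mem' {P Q} hP hQ d := by
    rw [coeff_add]
    exact V.le_v_add (hP d) (hQ d)
  zero_mem' d := by simp [V.v_zero]
  neg_mem' {P} hP d := by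
    rw [coeff_neg, V.v_neg]
    exact hP d

variable {σ : Type*}

lemma C_mem_integralPolys {x : K} (hx : 0 ≤ V.v x) : C x ∈ V.integralPolys σ := fun d => by
  classical
  rw [coeff_C]
  split_ifs
  · exact hx
  · simp [V.v_zero]

lemma X_mem_integralPolys (i : σ) : X i ∈ V.integralPolys σ := fun d => by
  classical
  rw [coeff_X]
  split_ifs
  · exact V.v_one.ge
  · simp [V.v_zero]

lemma boxPoly_mem_integralPolys {c : ℕ → ℕ → K} (hc : ∀ i j, 0 ≤ V.v (c i j)) (n : ℕ) :
    boxPoly c n ∈ V.integralPolys (Fin 2) := fun d => by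
  rw [coeff_boxPoly]
  split_ifs
  · exact hc _ _
  · simp [V.v_zero]

lemma le_v_prod {ι : Type*} (s : Finset ι) {f : ι → K} {c : ι → WithTop ℤ}
    (h : ∀ i ∈ s, c i ≤ V.v (f i)) : ∑ i ∈ s, c i ≤ V.v (∏ i ∈ s, f i) := by
  classical
  induction s using Finset.induction_on with
  | empty => simp [V.v_one]
  | @insert i s hi ih =>
    rw [Finset.sum_insert hi, Finset.prod_insert hi, V.v_mul]
    exact add_le_add (h i (Finset.mem_insert_self i s))
      (ih fun j hj => h j (Finset.mem_insert_of_mem hj))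

lemma le_v_eval [Fintype σ] {P : MvPolynomial σ K} (hP : P ∈ V.integralPolys σ) {x : σ → K}
    {ε : WithTop ℤ} (hε : 0 ≤ ε) (hx : ∀ i, ε ≤ V.v (x i)) {N : ℕ}
    (hN : ∀ d : σ →₀ ℕ, d.degree < N → P.coeff d = 0) : N • ε ≤ V.v (eval x P) := by
  rw [eval_eq']
  refine V.le_v_sum fun d _ => ?_
  by_cases hd : d.degree < N
  · simp [hN d hd, V.v_zero]
  rw [V.v_mul]
  refine le_add_of_nonneg_of_le (hP d) ?_
  calc N • ε ≤ d.degree • ε := nsmul_le_nsmul_left hε (not_lt.1 hd)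
  _ = ∑ i, d i • ε := by rw [Finsupp.degree_eq_sum, Finset.sum_smul]
  _ ≤ V.v (∏ i, x i ^ d i) :=
    V.le_v_prod _ fun i _ => by rw [V.v_pow]; exact nsmul_le_nsmul_right (hx i) _

lemma le_v_eval_sub_eval [Fintype σ] {P Q : MvPolynomial σ K} (hP : P ∈ V.integralPolys σ)
    (hQ : Q ∈ V.integralPolys σ) {x : σ → K} {ε : WithTop ℤ} (hε : 0 ≤ ε)
    (hx : ∀ i, ε ≤ V.v (x i)) {N : ℕ}
    (hPQ : ∀ d : σ →₀ ℕ, d.degree < N → P.coeff d = Q.coeff d) :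
    N • ε ≤ V.v (eval x P - eval x Q) := by
  rw [← map_sub]
  exact V.le_v_eval (sub_mem hP hQ) hε hx fun d hd => by rw [coeff_sub, hPQ d hd, sub_self]

lemma Tendsto.eval_of_coeff_eq [Fintype σ] {P Q : ℕ → MvPolynomial σ K}
    (hP : ∀ n, P n ∈ V.integralPolys σ) (hQ : ∀ n, Q n ∈ V.integralPolys σ)
    (hPQ : ∀ n (d : σ →₀ ℕ), d.degree < n → (P n).coeff d = (Q n).coeff d)
    {x : σ → K} {ε : WithTop ℤ} (hε : 0 < ε) (hx : ∀ i, ε ≤ V.v (x i)) {L : K}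
    (h : V.Tendsto (fun n => eval x (P n)) L) : V.Tendsto (fun n => eval x (Q n)) L :=
  h.of_v_sub fun N => ⟨N.toNat, fun n hn => by
    refine le_trans ?_ (V.le_v_eval_sub_eval (hQ n) (hP n) hε.le hx fun d hd => (hPQ n d hd).symm)
    exact le_trans (WithTop.coe_le_coe.2 (show N ≤ (n : ℤ) by omega)) (natCast_le_nsmul hε n)⟩

lemma truncTotal_mem_integralPolys [Finite σ] [DecidableEq σ] {H : MvPowerSeries σ K}
    (hH : ∀ d, 0 ≤ V.v (MvPowerSeries.coeff d H)) (n : ℕ) :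
    MvPowerSeries.truncTotal n H ∈ V.integralPolys σ := fun d => by
  rw [MvPowerSeries.coeff_truncTotal_eq_ite]
  split_ifs
  · exact hH d
  · simp [V.v_zero]

variable (V) in
lemma exists_tendsto_eval_truncTotal (hcomp : V.IsComplete) [Fintype σ] [DecidableEq σ]
    {H : MvPowerSeries σ K} (hH : ∀ d, 0 ≤ V.v (MvPowerSeries.coeff d H)) {x : σ → K}
    {ε : WithTop ℤ} (hε : 0 < ε) (hx : ∀ i, ε ≤ V.v (x i)) :
    ∃ z, V.Tendsto (fun n => eval x (MvPowerSeries.truncTotal n H)) z := by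
  refine hcomp _ fun N => ⟨N.toNat, fun m k hm hk => ?_⟩
  refine le_trans ?_ (V.le_v_eval_sub_eval (truncTotal_mem_integralPolys hH m)
    (truncTotal_mem_integralPolys hH k) hε.le hx (N := min m k) fun d hd => ?_)
  · exact le_trans (WithTop.coe_le_coe.2 (show N ≤ ((min m k : ℕ) : ℤ) by omega))
      (natCast_le_nsmul hε _)
  · rw [MvPowerSeries.coeff_truncTotal _ (by omega), MvPowerSeries.coeff_truncTotal _ (by omega)]

end Polynomials

end DVF

section FormalGroups

open MvPolynomial Finsupp

variable {K : Type} [Field K] {V : DVF K}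

lemma FGL.coeff_eq_coeff_X_add_X (F : FGL K V) {d : Fin 2 →₀ ℕ} (hd : d.degree < 2) :
    MvPowerSeries.coeff d F.F = coeff d (X 0 + X 1 : MvPolynomial (Fin 2) K) := by
  rw [degree_fin_two] at hd
  rw [← single_zero_add_single_one d]
  obtain ⟨h0, h1⟩ | ⟨h0, h1⟩ | ⟨h0, h1⟩ :
      (d 0 = 0 ∧ d 1 = 0) ∨ (d 0 = 1 ∧ d 1 = 0) ∨ (d 0 = 0 ∧ d 1 = 1) := by omega
  all_goals rw [h0, h1]; simp [F.const, F.linX, F.linY, coeff_X, single_eq_single_iff]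

namespace Isog

variable {Fg Gg : FGL K V} (φ : Isog V Fg Gg)

/-- `φ(F(X, Y))` modulo total degree `n`. -/
noncomputable def compLeft (n : ℕ) : MvPolynomial (Fin 2) K :=
  ∑ κ ∈ Finset.range n,
    C (PowerSeries.coeff κ φ.φ) * MvPowerSeries.truncTotal n Fg.F ^ κ

/-- `G(φ(X), φ(Y))` modulo total degree `n`. -/
noncomputable def compRight (n : ℕ) : MvPolynomial (Fin 2) K :=
  aeval ![Polynomial.aeval (X 0) (PowerSeries.trunc n φ.φ),
      Polynomial.aeval (X 1) (PowerSeries.trunc n φ.φ)]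
    (boxPoly (fun k l => MvPowerSeries.coeff (single 0 k + single 1 l) Gg.F) n)

lemma compLeft_mem (n : ℕ) : φ.compLeft n ∈ V.integralPolys (Fin 2) :=
  Subring.sum_mem _ fun κ _ => mul_mem (V.C_mem_integralPolys (φ.int_coeff κ))
    (pow_mem (V.truncTotal_mem_integralPolys Fg.int_coeff n) κ)

lemma compRight_mem (n : ℕ) : φ.compRight n ∈ V.integralPolys (Fin 2) := by
  have hq : ∀ i, Polynomial.aeval (X i) (PowerSeries.trunc n φ.φ) ∈ V.integralPolys (Fin 2) :=
    fun i => by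
      rw [Polynomial.aeval_def, PowerSeries.eval₂_trunc_eq_sum_range]
      exact Subring.sum_mem _ fun m _ => mul_mem (V.C_mem_integralPolys (φ.int_coeff m))
        (pow_mem (V.X_mem_integralPolys i) m)
  rw [compRight, aeval_boxPoly]
  refine Subring.sum_mem _ fun k _ => Subring.sum_mem _ fun l _ => ?_
  exact mul_mem (mul_mem (V.C_mem_integralPolys (Gg.int_coeff _)) (pow_mem (hq 0) k))
    (pow_mem (hq 1) l)

lemma coeff_compLeft {n : ℕ} {d : Fin 2 →₀ ℕ} (hd : d.degree < n) :
    coeff d (φ.compLeft n) = ∑ κ ∈ Finset.range (d.degree + 1),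
      PowerSeries.coeff κ φ.φ * MvPowerSeries.coeff d (Fg.F ^ κ) := by
  simp only [compLeft, coeff_sum, coeff_C_mul, MvPowerSeries.coeff_truncTotal_pow _ hd]
  refine Finset.eventually_constant_sum (fun κ hκ => ?_) hd
  rw [MvPowerSeries.coeff_pow_eq_zero_of_degree_lt Fg.const (by omega), mul_zero]

lemma coeff_compRight {n : ℕ} {d : Fin 2 →₀ ℕ} (hd : d.degree < n) :
    coeff d (φ.compRight n) = ∑ k ∈ Finset.range (d.degree + 1), ∑ l ∈ Finset.range (d.degree + 1),
      MvPowerSeries.coeff (single 0 k + single 1 l) Gg.F *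
        PowerSeries.coeff (d 0) (φ.φ ^ k) * PowerSeries.coeff (d 1) (φ.φ ^ l) := by
  rw [degree_fin_two] at hd ⊢
  simp only [compRight, aeval_boxPoly, coeff_sum, algebraMap_eq, mul_assoc, coeff_C_mul,
    Matrix.cons_val_zero, Matrix.cons_val_one, ← map_pow,
    coeff_aeval_X_zero_mul_aeval_X_one, PowerSeries.coeff_trunc_pow _ (show d 0 < n by omega),
    PowerSeries.coeff_trunc_pow _ (show d 1 < n by omega)]
  rw [Finset.eventually_constant_sum (fun k hk => Finset.sum_eq_zero fun l _ => by
    rw [PowerSeries.coeff_pow_eq_zero_of_lt φ.const (by omega), zero_mul, mul_zero]) hd]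
  refine Finset.sum_congr rfl fun k _ => Finset.eventually_constant_sum (fun l hl => ?_) hd
  rw [PowerSeries.coeff_pow_eq_zero_of_lt φ.const (show d 1 < l by omega), mul_zero, mul_zero]

lemma coeff_compLeft_eq_coeff_compRight {n : ℕ} {d : Fin 2 →₀ ℕ} (hd : d.degree < n) :
    coeff d (φ.compLeft n) = coeff d (φ.compRight n) := by
  rw [φ.coeff_compLeft hd, φ.coeff_compRight hd, degree_fin_two]
  have h := φ.hom (d 0) (d 1)
  rw [single_zero_add_single_one] at h
  exact h

lemma eval_compLeft (n : ℕ) (x : Fin 2 → K) :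
    eval x (φ.compLeft n) = ∑ κ ∈ Finset.range n,
      PowerSeries.coeff κ φ.φ * eval x (MvPowerSeries.truncTotal n Fg.F) ^ κ := by
  simp [compLeft]

lemma eval_compRight (n : ℕ) (a b : K) :
    eval ![a, b] (φ.compRight n) =
      eval ![(PowerSeries.trunc n φ.φ).eval a, (PowerSeries.trunc n φ.φ).eval b]
        (boxPoly (fun k l => MvPowerSeries.coeff (single 0 k + single 1 l) Gg.F) n) := by
  change aeval ![a, b] (aeval _ _) = aeval _ _
  rw [← AlgHom.comp_apply, comp_aeval]
  congr 2
  funext i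
  fin_cases i <;>
  · change aeval ![a, b] (Polynomial.aeval (X _) _) = _
    rw [← Polynomial.aeval_algHom_apply, aeval_X]
    rfl

lemma tendsto_eval_compRight {a b : K} (ha : 0 ≤ V.v a) (hb : 0 ≤ V.v b)
    (hφa : PSEval V φ.φ a 0) (hφb : PSEval V φ.φ b 0) :
    V.Tendsto (fun n => eval ![a, b] (φ.compRight n)) 0 := by
  have heval : ∀ n x, (PowerSeries.trunc n φ.φ).eval x =
      ∑ i ∈ Finset.range n, PowerSeries.coeff i φ.φ * x ^ i :=
    fun n x => PowerSeries.eval₂_trunc_eq_sum_range x (RingHom.id K) n φ.φ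
  have hnonneg : ∀ n x, 0 ≤ V.v x → 0 ≤ V.v ((PowerSeries.trunc n φ.φ).eval x) :=
    fun n x hx => by
      rw [heval]
      refine V.le_v_sum fun i _ => V.v_mul_nonneg (φ.int_coeff i) ?_
      rw [V.v_pow]
      exact nsmul_nonneg hx i
  intro N
  obtain ⟨M, hM⟩ := hφa N
  obtain ⟨M', hM'⟩ := hφb N
  refine ⟨max M M', fun n hn => ?_⟩
  set A := (PowerSeries.trunc n φ.φ).eval a
  set B := (PowerSeries.trunc n φ.φ).eval b
  have hAB : ∀ i, min (V.v A) (V.v B) ≤ V.v (![A, B] i) := fun i => by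
    fin_cases i
    exacts [min_le_left _ _, min_le_right _ _]
  have hbox := V.boxPoly_mem_integralPolys
    (c := fun k l => MvPowerSeries.coeff (single 0 k + single 1 l) Gg.F)
    (fun _ _ => Gg.int_coeff _) n
  have hG := V.le_v_eval hbox (le_min (hnonneg n a ha) (hnonneg n b hb)) hAB (N := 1)
    fun d hd => by
      rw [degree_fin_two] at hd
      rw [coeff_boxPoly, show d 0 = 0 by omega, show d 1 = 0 by omega]
      simp [Gg.const]
  rw [one_nsmul] at hG
  rw [sub_zero]
  dsimp only
  rw [φ.eval_compRight]
  refine le_trans (le_min ?_ ?_) hG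
  · simpa [A, heval] using hM n (le_of_max_le_left hn)
  · simpa [B, heval] using hM' n (le_of_max_le_right hn)

/-- The kernel of `φ` in `m_K` is closed under `F`: `z = F(a, b)` is again a root, and
`F(X, Y) ≡ X + Y` modulo degree `2` places it near `a + b`. -/
theorem exists_root_near_add (hcomp : V.IsComplete) {a b : K} (ha : 0 < V.v a)
    (hb : 0 < V.v b) (hφa : PSEval V φ.φ a 0) (hφb : PSEval V φ.φ b 0) :
    ∃ z, PSEval V φ.φ z 0 ∧ 2 • min (V.v a) (V.v b) ≤ V.v (z - (a + b)) := by
  set ε := min (V.v a) (V.v b)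
  have hε : 0 < ε := lt_min ha hb
  have hx : ∀ i, ε ≤ V.v (![a, b] i) := fun i => by
    fin_cases i
    exacts [min_le_left _ _, min_le_right _ _]
  have hF := V.truncTotal_mem_integralPolys Fg.int_coeff
  obtain ⟨z, hz⟩ := V.exists_tendsto_eval_truncTotal hcomp Fg.int_coeff hε hx
  have hzn : ∀ n, ε ≤ V.v (eval ![a, b] (MvPowerSeries.truncTotal n Fg.F)) := fun n => by
    simpa using V.le_v_eval (hF n) hε.le hx (N := 1) fun d hd => by
      rw [MvPowerSeries.coeff_truncTotal_eq_ite, (Finsupp.degree_eq_zero_iff d).1 (by omega)]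
      simp [Fg.const]
  have hzε : ε ≤ V.v z := hz.le_v (M₀ := 0) fun n _ => hzn n
  obtain ⟨W, hW⟩ := V.exists_sEval hcomp φ.int_coeff (hε.trans_le hzε)
  have hleft : V.Tendsto (fun n => eval ![a, b] (φ.compLeft n)) W := by
    simp only [eval_compLeft]
    exact hz.partialSum_comp φ.int_coeff (fun n => hε.le.trans (hzn n)) (hε.le.trans hzε) hW
  have hright := hleft.eval_of_coeff_eq φ.compLeft_mem φ.compRight_mem
    (fun n d hd => φ.coeff_compLeft_eq_coeff_compRight hd) hε hx
  refine ⟨z, hright.unique (φ.tendsto_eval_compRight ha.le hb.le hφa hφb) ▸ hW, ?_⟩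
  refine (hz.sub (DVF.tendsto_const (a + b))).le_v (M₀ := 2) fun n hn => ?_
  have hXY : eval ![a, b] (X 0 + X 1) = a + b := by simp
  rw [← hXY]
  refine V.le_v_eval_sub_eval (hF n) (add_mem (V.X_mem_integralPolys 0) (V.X_mem_integralPolys 1))
    hε.le hx fun d hd => ?_
  rw [MvPowerSeries.coeff_truncTotal _ (by omega), Fg.coeff_eq_coeff_X_add_X hd]

lemma pSEval_zero : PSEval V φ.φ 0 0 :=
  (DVF.tendsto_const 0).congr fun n => by
    refine (Finset.sum_eq_zero fun i _ => ?_).symm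
    cases i with
    | zero => simp [φ.const]
    | succ i => simp

lemma exists_root_near_nsmul (hcomp : V.IsComplete) {x : K} (hx : 0 < V.v x)
    (hφx : PSEval V φ.φ x 0) {k : ℕ} (hk : 1 ≤ k) :
    ∃ u, PSEval V φ.φ u 0 ∧ 2 • V.v x ≤ V.v (u - k * x) := by
  induction k, hk using Nat.le_induction with
  | base => exact ⟨x, hφx, by simp [V.v_zero]⟩
  | succ k _ ih =>
    obtain ⟨u, hφu, hu⟩ := ih
    have hxu : V.v x ≤ V.v u := by
      rw [show u = k * x + (u - k * x) by ring]
      refine V.le_v_add ?_ (le_trans (by rw [two_nsmul]; exact le_add_of_nonneg_right hx.le) hu)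
      rw [V.v_mul]
      exact le_add_of_nonneg_left (V.v_natCast_nonneg k)
    obtain ⟨z, hφz, hz⟩ := φ.exists_root_near_add hcomp (hx.trans_le hxu) hx hφu hφx
    rw [min_eq_right hxu] at hz
    refine ⟨z, hφz, ?_⟩
    rw [show z - ((k + 1 : ℕ) : K) * x = (z - (u + x)) + (u - k * x) by push_cast; ring]
    exact V.le_v_add hz hu

lemma sEval_coeff_succ_eq_zero {y : K} (hy : 0 < V.v y) (hy0 : y ≠ 0)
    (hφy : PSEval V φ.φ y 0) : V.SEval (fun j => PowerSeries.coeff (j + 1) φ.φ) y 0 :=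
  DVF.sEval_eq_zero_of_eq_mul_sub (fun n => φ.int_coeff (n + 1)) (by simp [DVF.v_zero])
    (by simp [φ.const]) (by simp) hy hy0 hφy

/-- A nonzero `x` in the kernel generates it: the roots near `k x`, `0 < k < p`, are `p - 1`
distinct nonzero elements of the kernel, all of valuation `v(x)`. -/
theorem v_eq_of_mem_kernel {p : ℕ} (hp : p.Prime) (hres : 0 < V.v (p : K))
    (hcomp : V.IsComplete) {S : Finset K} (hS : S.card = p)
    (hSmem : ∀ x : K, (0 < V.v x ∧ PSEval V φ.φ x 0) ↔ x ∈ S) {x y : K} (hxS : x ∈ S)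
    (hx0 : x ≠ 0) (hyS : y ∈ S) (hy0 : y ≠ 0) : V.v y = V.v x := by
  classical
  obtain ⟨hxpos, hφx⟩ := (hSmem x).2 hxS
  have hcop : ∀ k ∈ Finset.Ico 1 p, k.Coprime p := fun k hk => by
    rw [Finset.mem_Ico] at hk
    exact Nat.coprime_comm.1 (hp.coprime_iff_not_dvd.2 (Nat.not_dvd_of_pos_of_lt hk.1 hk.2))
  choose! u hφu hu using fun k (hk : k ∈ Finset.Ico 1 p) =>
    φ.exists_root_near_nsmul hcomp hxpos hφx (Finset.mem_Ico.1 hk).1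
  have hvu : ∀ k ∈ Finset.Ico 1 p, V.v (u k) = V.v x := fun k hk =>
    V.v_eq_of_two_nsmul_le_v_sub hres (hcop k hk) hx0 hxpos (hu k hk)
  have hinj : Set.InjOn u (Finset.Ico 1 p) := by
    intro i hi j hj hij
    by_contra hne
    wlog hlt : i < j generalizing i j
    · exact this hj hi hij.symm (Ne.symm hne) (by omega)
    rw [Finset.coe_Ico, Set.mem_Ico] at hi hj
    have hv : V.v (u j - u i) = V.v x := by
      refine V.v_eq_of_two_nsmul_le_v_sub hres (k := j - i) (hcop _ (by simp; omega)) hx0 hxpos ?_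
      rw [show u j - u i - ((j - i : ℕ) : K) * x = (u j - j * x) - (u i - i * x) by
        push_cast [Nat.cast_sub hlt.le]; ring]
      exact V.le_v_sub (hu j (by simp; omega)) (hu i (by simp; omega))
    rw [hij, sub_self, V.v_zero] at hv
    exact V.v_ne_top hx0 hv.symm
  have hsub : (Finset.Ico 1 p).image u ⊆ S.erase 0 := fun z hz => by
    obtain ⟨k, hk, rfl⟩ := Finset.mem_image.1 hz
    refine Finset.mem_erase.2
      ⟨fun h0 => V.v_ne_top hx0 ?_, (hSmem _).1 ⟨hvu k hk ▸ hxpos, hφu k hk⟩⟩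
    rw [← hvu k hk, h0, V.v_zero]
  have hcard : (S.erase 0).card ≤ ((Finset.Ico 1 p).image u).card := by
    have h0S : (0 : K) ∈ S := (hSmem 0).1 ⟨by simp [V.v_zero], φ.pSEval_zero⟩
    rw [Finset.card_image_of_injOn hinj, Nat.card_Ico, Finset.card_erase_of_mem h0S, hS]
  obtain ⟨k, hk, rfl⟩ :=
    Finset.mem_image.1 (Finset.eq_of_subset_of_card_le hsub hcard ▸ Finset.mem_erase.2 ⟨hy0, hyS⟩)
  exact hvu k hk

end Isog

end FormalGroups

theorem stmt4_general (p : ℕ) (hp : p.Prime) (K : Type) [Field K]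
    (V : DVF K) (hcomp : V.IsComplete) (hres : 0 < V.v (p : K))
    (Fg Gg : FGL K V) (φ : Isog V Fg Gg) (hht : HasHeight V p 1 φ.φ)
    (t : ℕ) (ht : V.v (PowerSeries.coeff (R := K) 1 φ.φ) = ((t : ℤ) : WithTop ℤ))
    -- the kernel of φ consists of exactly p elements, all of them in F(K) = m_K:
    (hker : ∃ S : Finset K, S.card = p ∧
      ∀ x : K, (0 < V.v x ∧ PSEval V φ.φ x 0) ↔ x ∈ S) :
    (∀ x : K, 0 < V.v x → PSEval V φ.φ x 0 → x ≠ 0 →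
        (p - 1) • V.v x = ((t : ℤ) : WithTop ℤ)) ∧ (p - 1) ∣ t := by
  classical
  obtain ⟨S, hS, hSmem⟩ := hker
  have h0S : (0 : K) ∈ S := (hSmem 0).1 ⟨by simp [DVF.v_zero], φ.pSEval_zero⟩
  obtain ⟨x, hxS, hx0⟩ := Finset.exists_mem_ne (s := S) (by rw [hS]; exact hp.one_lt) 0
  -- `t` is the valuation of the constant term of `φ / T`, whose roots in `m_K` are the nonzero
  -- points of the kernel.
  have hdeg := V.hasWeierstrassDegree_of_hasHeight hp.pos φ.int_coeff hht
  rw [pow_one] at hdeg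
  have hroots : ∀ y ∈ S.erase 0, y ≠ 0 ∧ 0 < V.v y ∧
      V.SEval (fun j => PowerSeries.coeff (j + 1) φ.φ) y 0 := fun y hy => by
    obtain ⟨hy0, hyS⟩ := Finset.mem_erase.1 hy
    obtain ⟨hypos, hφy⟩ := (hSmem y).2 hyS
    exact ⟨hy0, hypos, φ.sEval_coeff_succ_eq_zero hypos hy0 hφy⟩
  have hsum : ((t : ℤ) : WithTop ℤ) = (p - 1) • V.v x := by
    rw [← ht, DVF.v_coeff_zero_eq_sum_of_roots hdeg (by rw [Finset.card_erase_of_mem h0S, hS])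
      hroots, Finset.sum_congr rfl fun y hy => φ.v_eq_of_mem_kernel hp hres hcomp hS hSmem hxS hx0
      (Finset.mem_of_mem_erase hy) (Finset.ne_of_mem_erase hy), Finset.sum_const,
      Finset.card_erase_of_mem h0S, hS]
  refine ⟨fun y hy hφy hy0 => ?_, ?_⟩
  · rw [hsum, φ.v_eq_of_mem_kernel hp hres hcomp hS hSmem hxS hx0 ((hSmem y).1 ⟨hy, hφy⟩) hy0]
  · lift V.v x to ℤ using V.v_ne_top hx0 with w
    rw [← WithTop.coe_nsmul, WithTop.coe_inj, nsmul_eq_mul] at hsum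
    exact Int.natCast_dvd_natCast.1 ⟨w, hsum⟩

/-- Corollary 2.3. Let `K` be a complete discrete valuation field of
characteristic 0 with residue characteristic `p > 0`, and `φ : F → G` an isogeny of
formal groups over `O_K` of height 1 whose kernel `F[φ]` (of order `p`) is contained in
`F(K)`.  Set `t := v_K(D(φ))`.  Then every nonzero `x ∈ F[φ]` satisfies
`v_K(x) = t/(p-1)`; in particular `(p-1) ∣ t`. -/
theorem stmt4 (p : ℕ) (hp : p.Prime) (K : Type) [Field K] [CharZero K]
    (V : DVF K) (hcomp : V.IsComplete) (hres : 0 < V.v (p : K))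
    (Fg Gg : FGL K V) (φ : Isog V Fg Gg) (hht : HasHeight V p 1 φ.φ)
    (t : ℕ) (ht : V.v (PowerSeries.coeff (R := K) 1 φ.φ) = ((t : ℤ) : WithTop ℤ))
    -- the kernel of φ consists of exactly p elements, all of them in F(K) = m_K:
    (hker : ∃ S : Finset K, S.card = p ∧
      ∀ x : K, (0 < V.v x ∧ PSEval V φ.φ x 0) ↔ x ∈ S) :
    (∀ x : K, 0 < V.v x → PSEval V φ.φ x 0 → x ≠ 0 →
        (p - 1) • V.v x = ((t : ℤ) : WithTop ℤ)) ∧ (p - 1) ∣ t :=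
  stmt4_general p hp K V hcomp hres Fg Gg φ hht t ht hker
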